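/- arXiv:1411.2344 — 4 statements merged into one kernel-verified Lean document; each statement's English description precedes it below -/
import Mathlib

section
/- If A ∈ ℝ^{m×n} satisfies the robust null space property of order s with constants 0 < ρ < 1 and τ > 0, then for every x, z ∈ ℝⁿ with ‖A(z − x)‖₁ ≤ 2η and ‖z‖₁ ≤ ‖x‖₁, one has ‖z − x‖₁ ≤ (2(1+ρ)/(1−ρ))·σ_s(x)₁ + (4τ/(1−ρ))·η. -/
/-- A vector is `s`-sparse if it has at most `s` nonzero coordinates. -/
def Sparse {n : ℕ} (s : ℕ) (x : Fin n → ℝ) : Prop :=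
  (Finset.univ.filter fun i => x i ≠ 0).card ≤ s

/-- The robust null space property of order `s` with constants `ρ`, `τ`. -/
def RNSP {m n : ℕ} (A : Matrix (Fin m) (Fin n) ℝ) (s : ℕ) (ρ τ : ℝ) : Prop :=
  ∀ S : Finset (Fin n), S.card ≤ s → ∀ x : Fin n → ℝ,
    ∑ i ∈ S, |x i| ≤ ρ * ∑ i ∈ Sᶜ, |x i| + τ * ∑ j, |A.mulVec x j|

/-- If `A` satisfies the robust null space property of order `s` with constants
`0 < ρ < 1`, `τ > 0`, then for all `x, z` with `‖A(z-x)‖₁ ≤ 2η` and `‖z‖₁ ≤ ‖x‖₁`,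
`‖z - x‖₁ ≤ (2(1+ρ)/(1-ρ)) σ_s(x)₁ + (4τ/(1-ρ)) η`. -/
theorem rnsp_recovery_bound {m n : ℕ} (A : Matrix (Fin m) (Fin n) ℝ) (s : ℕ)
    (ρ τ : ℝ) (hρ0 : 0 < ρ) (hρ1 : ρ < 1) (hτ : 0 < τ) (h : RNSP A s ρ τ)
    (x z : Fin n → ℝ) (η : ℝ)
    (hA : ∑ j, |A.mulVec (z - x) j| ≤ 2 * η)
    (hz : ∑ i, |z i| ≤ ∑ i, |x i|) :
    ∑ i, |z i - x i| ≤
      (2 * (1 + ρ) / (1 - ρ)) *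
        sInf {r : ℝ | ∃ w : Fin n → ℝ, Sparse s w ∧ r = ∑ i, |x i - w i|} +
      (4 * τ / (1 - ρ)) * η := by
  have h1ρ : 0 < 1 - ρ := by linarith
  set v : Fin n → ℝ := z - x with hv
  have hvdef : ∀ i, v i = z i - x i := fun i => rfl
  set e := ∑ j, |A.mulVec v j| with he
  have he0 : 0 ≤ e := Finset.sum_nonneg fun j _ => abs_nonneg _
  have hη : 0 ≤ η := by linarith
  set T := ∑ i, |z i - x i| with hT
  have hT0 : 0 ≤ T := Finset.sum_nonneg fun i _ => abs_nonneg _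
  -- main bound for each index set S of card ≤ s
  have main : ∀ S : Finset (Fin n), S.card ≤ s →
      T ≤ (2 * (1 + ρ) / (1 - ρ)) * (∑ i ∈ Sᶜ, |x i|) + (4 * τ / (1 - ρ)) * η := by
    intro S hS
    have hr := h S hS v
    rw [← he] at hr
    set a := ∑ i ∈ S, |v i| with ha
    set b := ∑ i ∈ Sᶜ, |v i| with hb'
    set X := ∑ i ∈ Sᶜ, |x i| with hX
    have hX0 : 0 ≤ X := Finset.sum_nonneg fun i _ => abs_nonneg _
    have hsplit : T = a + b := by
      have : T = ∑ i, |v i| := by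
        apply Finset.sum_congr rfl; intro i _; rw [hvdef]
      rw [this, ha, hb', ← Finset.sum_add_sum_compl S fun i => |v i|]
    have h1 : ∑ i ∈ S, |x i| - a ≤ ∑ i ∈ S, |z i| := by
      rw [ha, ← Finset.sum_sub_distrib]
      apply Finset.sum_le_sum
      intro i _
      have := abs_sub_abs_le_abs_sub (x i) (-(v i))
      rw [abs_neg, sub_neg_eq_add, hvdef] at this
      have hzi : x i + (z i - x i) = z i := by ring
      rw [hzi] at this
      rw [hvdef]
      linarith
    have h2 : b - X ≤ ∑ i ∈ Sᶜ, |z i| := by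
      rw [hb', hX, ← Finset.sum_sub_distrib]
      apply Finset.sum_le_sum
      intro i _
      have := abs_sub_abs_le_abs_sub (v i) (-(x i))
      rw [abs_neg, sub_neg_eq_add, hvdef] at this
      have hzi : z i - x i + x i = z i := by ring
      rw [hzi] at this
      rw [hvdef]
      linarith
    have hxsplit : ∑ i, |x i| = ∑ i ∈ S, |x i| + X := by
      rw [hX, Finset.sum_add_sum_compl]
    have hzsplit : ∑ i, |z i| = ∑ i ∈ S, |z i| + ∑ i ∈ Sᶜ, |z i| := by
      rw [Finset.sum_add_sum_compl]
    have hb2 : b ≤ 2 * X + a := by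
      rw [hxsplit, hzsplit] at hz
      linarith
    have hA' : e ≤ 2 * η := hA
    have heq : (2 * (1 + ρ) / (1 - ρ)) * X + (4 * τ / (1 - ρ)) * η
        = (2 * (1 + ρ) * X + 4 * τ * η) / (1 - ρ) := by
      field_simp
    rw [hsplit, heq, le_div_iff₀ h1ρ]
    nlinarith [hr, hb2, hA', he0, mul_le_mul_of_nonneg_left hb2 hρ0.le,
      mul_le_mul_of_nonneg_left hA' hτ.le]
  -- now take infimum
  set Q : Set ℝ := {r : ℝ | ∃ w : Fin n → ℝ, Sparse s w ∧ r = ∑ i, |x i - w i|} with hQ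
  have hQne : Q.Nonempty := ⟨∑ i, |x i|, 0, by simp [Sparse], by simp⟩
  have hC : 0 < 2 * (1 + ρ) / (1 - ρ) := by positivity
  have key : ∀ r ∈ Q, T ≤ (2 * (1 + ρ) / (1 - ρ)) * r + (4 * τ / (1 - ρ)) * η := by
    rintro r ⟨w, hw, rfl⟩
    set S := Finset.univ.filter fun i => w i ≠ 0 with hSdef
    have hXr : ∑ i ∈ Sᶜ, |x i| ≤ ∑ i, |x i - w i| := by
      calc ∑ i ∈ Sᶜ, |x i| = ∑ i ∈ Sᶜ, |x i - w i| := by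
            apply Finset.sum_congr rfl
            intro i hi
            have : w i = 0 := by
              simp only [hSdef, Finset.mem_compl, Finset.mem_filter, Finset.mem_univ,
                true_and, not_not] at hi
              exact hi
            rw [this, sub_zero]
        _ ≤ ∑ i, |x i - w i| :=
            Finset.sum_le_sum_of_subset_of_nonneg (Finset.subset_univ _)
              fun i _ _ => abs_nonneg _
    have := main S hw
    have hmono := mul_le_mul_of_nonneg_left hXr hC.le
    linarith
  have hineq : (T - (4 * τ / (1 - ρ)) * η) / (2 * (1 + ρ) / (1 - ρ)) ≤ sInf Q := by
    apply le_csInf hQne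
    intro r hr
    rw [div_le_iff₀ hC]
    have := key r hr
    linarith [(key r hr), mul_comm r (2 * (1 + ρ) / (1 - ρ))]
  rw [div_le_iff₀ hC] at hineq
  linarith [hineq, mul_comm (sInf Q) (2 * (1 + ρ) / (1 - ρ))]
end

section
/- If A satisfies the robust null space property of order s with constants ρ < 1 and τ, then for any s-sparse x and any η ≥ 0, every minimizer z of ‖z‖₁ subject to ‖Ax − Az‖₁ ≤ η satisfies ‖z − x‖₁ ≤ (4τ/(1−ρ))·η. In particular when η = 0, z = x. -/
/-- If `A` has the robust null space property of order `s` (constants `ρ < 1`, `τ`),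
`x` is `s`-sparse and `η ≥ 0`, then every `ℓ₁`-minimizer `z` subject to
`‖Ax - Az‖₁ ≤ η` satisfies `‖z - x‖₁ ≤ (4τ/(1-ρ)) η`; in particular `η = 0 → z = x`. -/
theorem rnsp_sparse_recovery {m n : ℕ} (A : Matrix (Fin m) (Fin n) ℝ) (s : ℕ)
    (ρ τ : ℝ) (hρ0 : 0 < ρ) (hρ1 : ρ < 1) (hτ : 0 < τ) (h : RNSP A s ρ τ)
    (x : Fin n → ℝ) (hx : Sparse s x) (η : ℝ) (hη : 0 ≤ η)
    (z : Fin n → ℝ)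
    (hfeas : ∑ j, |A.mulVec x j - A.mulVec z j| ≤ η)
    (hmin : ∀ w : Fin n → ℝ, (∑ j, |A.mulVec x j - A.mulVec w j| ≤ η) →
      ∑ i, |z i| ≤ ∑ i, |w i|) :
    ∑ i, |z i - x i| ≤ (4 * τ / (1 - ρ)) * η ∧ (η = 0 → z = x) := by
  set S := Finset.univ.filter fun i => x i ≠ 0 with hS
  have h1ρ : (0 : ℝ) < 1 - ρ := by linarith
  -- the residual of v = z - x
  have hAv : ∑ j, |A.mulVec (fun i => z i - x i) j| ≤ η := by
    have hv : (fun i => z i - x i) = z - x := rfl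
    calc ∑ j, |A.mulVec (fun i => z i - x i) j|
        = ∑ j, |A.mulVec x j - A.mulVec z j| := by
          refine Finset.sum_congr rfl fun j _ => ?_
          rw [hv, Matrix.mulVec_sub]
          simp [abs_sub_comm]
      _ ≤ η := hfeas
  have hrnsp := h S hx (fun i => z i - x i)
  have hτη : τ * ∑ j, |A.mulVec (fun i => z i - x i) j| ≤ τ * η :=
    mul_le_mul_of_nonneg_left hAv hτ.le
  set a := ∑ i ∈ S, |z i - x i| with ha
  set b := ∑ i ∈ Sᶜ, |z i - x i| with hb
  have hab : a ≤ ρ * b + τ * η := le_trans hrnsp (by linarith)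
  -- x is feasible
  have hminx : ∑ i, |z i| ≤ ∑ i, |x i| := by
    apply hmin
    simp [hη]
  -- on Sᶜ, x i = 0
  have hxc : ∀ i ∈ Sᶜ, x i = 0 := by
    intro i hi
    simpa [hS] using hi
  have hzc : ∑ i ∈ Sᶜ, |z i| = b := by
    refine Finset.sum_congr rfl fun i hi => ?_
    rw [hxc i hi, sub_zero]
  have hxczero : ∑ i ∈ Sᶜ, |x i| = 0 :=
    Finset.sum_eq_zero fun i hi => by rw [hxc i hi, abs_zero]
  have hsplitz : ∑ i ∈ S, |z i| + ∑ i ∈ Sᶜ, |z i| = ∑ i, |z i| :=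
    Finset.sum_add_sum_compl S _
  have hsplitx : ∑ i ∈ S, |x i| + ∑ i ∈ Sᶜ, |x i| = ∑ i, |x i| :=
    Finset.sum_add_sum_compl S _
  have hxa : ∑ i ∈ S, |x i| - ∑ i ∈ S, |z i| ≤ a := by
    rw [← Finset.sum_sub_distrib]
    refine Finset.sum_le_sum fun i _ => ?_
    calc |x i| - |z i| ≤ |x i - z i| := abs_sub_abs_le_abs_sub _ _
      _ = |z i - x i| := abs_sub_comm _ _
  have hba : b ≤ a := by
    have := hminx
    rw [← hsplitz, ← hsplitx, hxczero, hzc] at this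
    linarith
  have hbound : (1 - ρ) * b ≤ τ * η := by nlinarith
  have hsplit : a + b = ∑ i, |z i - x i| := Finset.sum_add_sum_compl S _
  have hmain : ∑ i, |z i - x i| ≤ (4 * τ / (1 - ρ)) * η := by
    rw [← hsplit, div_mul_eq_mul_div, le_div_iff₀ h1ρ]
    nlinarith
  refine ⟨hmain, fun hη0 => ?_⟩
  subst hη0
  have hle0 : ∑ i, |z i - x i| ≤ 0 := by simpa using hmain
  have hzero : ∀ i ∈ Finset.univ, |z i - x i| = 0 := by
    rw [← Finset.sum_eq_zero_iff_of_nonneg fun i _ => abs_nonneg _]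
    exact le_antisymm hle0 (Finset.sum_nonneg fun i _ => abs_nonneg _)
  funext i
  have := hzero i (Finset.mem_univ i)
  have := abs_eq_zero.mp this
  linarith
end

section
/- Let H = (L ∪ R, E) be a bipartite d-regular graph with edge set identified with [Nd], let C₀ ∈ ℝ^{k×d} satisfy the robust null space property of order δ₀d with constants ρ₀ < 1 and τ₀, and let A be the Tanner measurement matrix of H and C₀. Suppose S ⊆ [Nd] satisfies deg(v,S) ≤ δ₀d for every v ∈ L. Then for all x ∈ ℝ^{Nd}: ‖x_S‖₁ ≤ (ρ₀/(1+ρ₀))‖x‖₁ + (τ₀/(1+ρ₀))‖Ax‖₁. -/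
/-- If every left vertex of a bipartite `d`-regular graph (with `Nd` labeled edges,
left/right edge-incidence enumerations `eL`, `eR`) has at most `δ₀ d` edges in `S`,
and `C₀` satisfies the robust null space property of order `δ₀ d`, then the Tanner
measurement matrix `A` of the graph and `C₀` satisfies
`‖x_S‖₁ ≤ (ρ₀/(1+ρ₀)) ‖x‖₁ + (τ₀/(1+ρ₀)) ‖Ax‖₁`. -/
theorem tanner_small_degree_rnsp {N d k : ℕ} (δ₀ ρ₀ τ₀ : ℝ)
    (hρ0 : 0 < ρ₀) (hρ1 : ρ₀ < 1) (hτ : 0 < τ₀)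
    (C₀ : Matrix (Fin k) (Fin d) ℝ)
    (hC₀ : ∀ T : Finset (Fin d), (T.card : ℝ) ≤ δ₀ * d → ∀ v : Fin d → ℝ,
      ∑ j ∈ T, |v j| ≤ ρ₀ * ∑ j ∈ Tᶜ, |v j| + τ₀ * ∑ i, |C₀.mulVec v i|)
    (eL eR : Fin N → Fin d → Fin (N * d))
    (hL : Function.Bijective fun p : Fin N × Fin d => eL p.1 p.2)
    (hR : Function.Bijective fun p : Fin N × Fin d => eR p.1 p.2)
    (A : Matrix ((Fin N ⊕ Fin N) × Fin k) (Fin (N * d)) ℝ)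
    (hAdef : A = Matrix.of fun p e =>
      match p.1 with
      | Sum.inl v => ∑ j, if eL v j = e then C₀ p.2 j else 0
      | Sum.inr v => ∑ j, if eR v j = e then C₀ p.2 j else 0)
    (S : Finset (Fin (N * d)))
    (hdeg : ∀ v : Fin N, ((Finset.univ.filter fun j => eL v j ∈ S).card : ℝ) ≤ δ₀ * d)
    (x : Fin (N * d) → ℝ) :
    ∑ e ∈ S, |x e| ≤ (ρ₀ / (1 + ρ₀)) * ∑ e, |x e| +
      (τ₀ / (1 + ρ₀)) * ∑ p, |A.mulVec x p| := by
  classical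
  set TS : Fin N → Finset (Fin d) :=
    fun v => Finset.univ.filter fun j => eL v j ∈ S with hTS
  -- A applied at left vertices computes C₀ on the local edge values
  have hmv : ∀ v i, A.mulVec x (Sum.inl v, i) =
      C₀.mulVec (fun j => x (eL v j)) i := by
    intro v i
    subst hAdef
    simp only [Matrix.mulVec, dotProduct, Matrix.of_apply, Finset.sum_mul]
    rw [Finset.sum_comm]
    simp [ite_mul, Finset.sum_ite_eq]
  -- per-vertex RNSP bound
  have key : ∀ v : Fin N, ∑ j ∈ TS v, |x (eL v j)| ≤
      ρ₀ * ∑ j ∈ (TS v)ᶜ, |x (eL v j)| +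
      τ₀ * ∑ i, |A.mulVec x (Sum.inl v, i)| := by
    intro v
    have := hC₀ (TS v) (hdeg v) (fun j => x (eL v j))
    simpa [hmv] using this
  -- summed identities
  have hS : ∑ v, ∑ j ∈ TS v, |x (eL v j)| = ∑ e ∈ S, |x e| := by
    have h2 := Fintype.sum_bijective _ hL
      (fun p : Fin N × Fin d => if eL p.1 p.2 ∈ S then |x (eL p.1 p.2)| else 0)
      (fun e => if e ∈ S then |x e| else 0) (fun p => rfl)
    rw [Fintype.sum_prod_type] at h2
    rw [Finset.sum_congr rfl (fun v _ => Finset.sum_filter _ _), h2,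
      Finset.sum_ite_mem, Finset.univ_inter]
  have htot : ∑ v, ∑ j, |x (eL v j)| = ∑ e, |x e| := by
    have h2 := Fintype.sum_bijective _ hL
      (fun p : Fin N × Fin d => |x (eL p.1 p.2)|) (fun e => |x e|) (fun p => rfl)
    rw [Fintype.sum_prod_type] at h2
    exact h2
  have hcompl : ∀ v : Fin N, ∑ j ∈ (TS v)ᶜ, |x (eL v j)| =
      ∑ j, |x (eL v j)| - ∑ j ∈ TS v, |x (eL v j)| := by
    intro v
    have := Finset.sum_add_sum_compl (TS v) (fun j => |x (eL v j)|)
    linarith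
  have hB : ∑ v, ∑ i, |A.mulVec x (Sum.inl v, i)| ≤ ∑ p, |A.mulVec x p| := by
    rw [Fintype.sum_prod_type (f := fun p => |A.mulVec x p|), Fintype.sum_sum_type]
    have : 0 ≤ ∑ v : Fin N, ∑ i, |A.mulVec x (Sum.inr v, i)| :=
      Finset.sum_nonneg fun _ _ => Finset.sum_nonneg fun _ _ => abs_nonneg _
    linarith
  -- combine
  have hsum : ∑ e ∈ S, |x e| ≤
      ρ₀ * (∑ e, |x e| - ∑ e ∈ S, |x e|) + τ₀ * ∑ p, |A.mulVec x p| := by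
    calc ∑ e ∈ S, |x e| = ∑ v, ∑ j ∈ TS v, |x (eL v j)| := hS.symm
      _ ≤ ∑ v, (ρ₀ * ∑ j ∈ (TS v)ᶜ, |x (eL v j)| +
          τ₀ * ∑ i, |A.mulVec x (Sum.inl v, i)|) :=
        Finset.sum_le_sum fun v _ => key v
      _ = ρ₀ * (∑ v, ∑ j, |x (eL v j)| - ∑ v, ∑ j ∈ TS v, |x (eL v j)|) +
          τ₀ * ∑ v, ∑ i, |A.mulVec x (Sum.inl v, i)| := by
        rw [Finset.sum_add_distrib, ← Finset.mul_sum, ← Finset.mul_sum,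
          Finset.sum_congr rfl (fun v _ => hcompl v), Finset.sum_sub_distrib]
      _ ≤ ρ₀ * (∑ e, |x e| - ∑ e ∈ S, |x e|) + τ₀ * ∑ p, |A.mulVec x p| := by
        rw [htot, hS]
        have := hB
        nlinarith
  have h1 : (0:ℝ) < 1 + ρ₀ := by linarith
  rw [div_mul_eq_mul_div, div_mul_eq_mul_div, ← add_div, le_div_iff₀ h1]
  nlinarith
end

section
/- If a, b > 0 satisfy δ₀d·b ≤ (δd/δ₀)·b + λ(a+b)/2 with δ = δ₀²/4, d > 16/δ, and λ < 3√d, then b < a/3. -/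
/-- The numerical inequality at the heart of the Zémor iteration: if `a, b > 0` satisfy
`δ₀ d b ≤ (δ d / δ₀) b + λ (a + b)/2` with `δ = δ₀²/4`, `d > 16/δ` and `λ < 3√d`,
then `b < a/3`. -/
theorem zemor_numeric (a b δ δ₀ d lam : ℝ)
    (ha : 0 < a) (hb : 0 < b) (hδ₀ : 0 < δ₀)
    (hδ : δ = δ₀ ^ 2 / 4) (hd : 16 / δ < d) (hlam : lam < 3 * Real.sqrt d)
    (hineq : δ₀ * d * b ≤ (δ * d / δ₀) * b + lam * (a + b) / 2) :
    b < a / 3 := by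
  subst hδ
  have hδ₀2 : 0 < δ₀ ^ 2 / 4 := by positivity
  have hd64 : 64 < δ₀ ^ 2 * d := by
    rw [div_lt_iff₀ hδ₀2] at hd
    nlinarith
  have hdpos : 0 < d := by nlinarith [sq_nonneg δ₀]
  have hs : Real.sqrt d ^ 2 = d := Real.sq_sqrt hdpos.le
  have hspos : 0 < Real.sqrt d := Real.sqrt_pos.mpr hdpos
  have h8 : 8 < δ₀ * Real.sqrt d := by
    nlinarith [hs, mul_pos hδ₀ hspos]
  have hineq' : (3/4) * δ₀ * d * b ≤ lam * (a + b) / 2 := by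
    have : (δ₀ ^ 2 / 4 * d / δ₀) * b = (δ₀ / 4) * d * b := by
      field_simp
    nlinarith
  have hlam' : lam * (a + b) / 2 < 3 * Real.sqrt d * (a + b) / 2 := by
    have : 0 < a + b := by linarith
    nlinarith
  have h6 : 6 * Real.sqrt d * b < (3/4) * δ₀ * d * b := by
    have : 8 * Real.sqrt d < δ₀ * d := by nlinarith
    nlinarith
  nlinarith
end
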